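/- Let f satisfy the growth condition with exponent λ = 1. Then ln f⁻¹(x) ≍ ln x as x → ∞, and ln((f⁻¹)'(1/ε)/ε) ≍ ln(1/ε) as ε → 0⁺; that is, there exist constants 0 < C₁ ≤ C₂ such that C₁ ln(1/ε) ≤ ln((f⁻¹)'(1/ε)/ε) ≤ C₂ ln(1/ε) for all sufficiently small ε > 0. -/

import Mathlib

/-!
Since `(log f')' = f''/f'` lies between `c₁/x` and `c₂/x`, the function `log f'(x) - c log x`
is monotone for `c = c₁` and antitone for `c = c₂`. Hence `f'` increases to `∞`,
`log f'(x) = O(log x)`, and `f'(x) ≤ 2^c₂ f'(x/2)`; with the mean value theorem this gives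
`f(x) ≍ x f'(x)`. Therefore `log f(x) ≍ log x`, and for `y = f(x)` also
`log (y g'(y)) = log (f(x)/f'(x)) = log x + O(1) ≍ log y`.
-/

open Filter Set Topology

/-- The growth condition with exponent `lam` on the ray `[x₀, ∞)`. -/
def GrowthCondition (f : ℝ → ℝ) (lam x₀ : ℝ) : Prop :=
  (∀ x ∈ Set.Ici x₀, DifferentiableAt ℝ f x) ∧
  (∀ x ∈ Set.Ici x₀, DifferentiableAt ℝ (deriv f) x) ∧
  StrictMonoOn f (Set.Ici x₀) ∧
  Filter.Tendsto f Filter.atTop Filter.atTop ∧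
  (∀ x ∈ Set.Ici x₀, 0 < deriv f x) ∧
  ∃ c₁ c₂ : ℝ, 0 < c₁ ∧ c₁ ≤ c₂ ∧
    ∀ᶠ x in Filter.atTop,
      c₁ * x ^ (-lam) ≤ deriv (deriv f) x / deriv f x ∧
      deriv (deriv f) x / deriv f x ≤ c₂ * x ^ (-lam)

/-- `g` is a (two-sided) inverse of `f` relative to the ray `[x₀, ∞)`. -/
def IsInverseOn (f g : ℝ → ℝ) (x₀ : ℝ) : Prop :=
  (∀ x ∈ Set.Ici x₀, g (f x) = x) ∧ (∀ y ∈ Set.Ici (f x₀), f (g y) = y)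

open Real

section LogDerivative

variable {u u' : ℝ → ℝ} {a c : ℝ}

lemma monotoneOn_sub_mul_log (ha : 0 < a) (hu : ∀ x ∈ Ici a, HasDerivAt u (u' x) x)
    (hc : ∀ x ∈ Ici a, c * x⁻¹ ≤ u' x) : MonotoneOn (fun x => u x - c * log x) (Ici a) := by
  have hd : ∀ x ∈ Ici a, HasDerivAt (fun t => u t - c * log t) (u' x - c * x⁻¹) x :=
    fun x hx => (hu x hx).sub ((hasDerivAt_log (ha.trans_le hx).ne').const_mul c)
  refine monotoneOn_of_deriv_nonneg (convex_Ici a)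
    (fun x hx => (hd x hx).continuousAt.continuousWithinAt) ?_ ?_ <;> rw [interior_Ici]
  · exact fun x hx => (hd x (Ioi_subset_Ici_self hx)).differentiableAt.differentiableWithinAt
  · intro x hx
    rw [(hd x (Ioi_subset_Ici_self hx)).deriv]
    linarith [hc x (Ioi_subset_Ici_self hx)]

lemma antitoneOn_sub_mul_log (ha : 0 < a) (hu : ∀ x ∈ Ici a, HasDerivAt u (u' x) x)
    (hc : ∀ x ∈ Ici a, u' x ≤ c * x⁻¹) : AntitoneOn (fun x => u x - c * log x) (Ici a) := by
  have hneg := monotoneOn_sub_mul_log (u := fun x => -u x) (u' := fun x => -u' x) (c := -c) ha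
    (fun x hx => (hu x hx).neg) (fun x hx => by linarith [hc x hx])
  intro x hx y hy hxy
  have := hneg hx hy hxy
  simp only at this ⊢
  linarith

end LogDerivative

section LogSandwich

variable {φ : ℝ → ℝ} {a c : ℝ}

lemma monotoneOn_of_monotoneOn_log_sub_mul_log (ha : 0 < a) (hc : 0 ≤ c)
    (hφ : ∀ x ∈ Ici a, 0 < φ x) (h : MonotoneOn (fun x => log (φ x) - c * log x) (Ici a)) :
    MonotoneOn φ (Ici a) := by
  intro x hx y hy hxy
  have hlog := h hx hy hxy
  have hc_log : c * log x ≤ c * log y := by gcongr; exact ha.trans_le hx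
  simp only at hlog
  exact (log_le_log_iff (hφ x hx) (hφ y hy)).1 (by linarith)

lemma tendsto_atTop_of_monotoneOn_log_sub_mul_log (hc : 0 < c) (hφ : ∀ x ∈ Ici a, 0 < φ x)
    (h : MonotoneOn (fun x => log (φ x) - c * log x) (Ici a)) : Tendsto φ atTop atTop := by
  have hlog : Tendsto (fun x => c * log x + (log (φ a) - c * log a)) atTop atTop :=
    tendsto_atTop_add_const_right _ _ (tendsto_log_atTop.const_mul_atTop hc)
  refine tendsto_atTop_mono' atTop ?_ (tendsto_exp_atTop.comp hlog)
  filter_upwards [eventually_ge_atTop a] with x hx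
  have := h self_mem_Ici hx hx
  simp only at this
  rw [Function.comp_apply, ← exp_log (hφ x hx), exp_le_exp]
  linarith

lemma le_two_rpow_mul_of_antitoneOn_log_sub_mul_log (ha : 0 < a) (hφ : ∀ x ∈ Ici a, 0 < φ x)
    (h : AntitoneOn (fun x => log (φ x) - c * log x) (Ici a)) {x : ℝ} (hx : 2 * a ≤ x) :
    φ x ≤ 2 ^ c * φ (x / 2) := by
  have hx₂ : x / 2 ∈ Ici a := by rw [mem_Ici]; linarith
  have hlog := h hx₂ (show x ∈ Ici a by rw [mem_Ici]; linarith) (by linarith)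
  simp only at hlog
  rw [log_div (by linarith) two_ne_zero] at hlog
  rw [← log_le_log_iff (hφ x (by rw [mem_Ici]; linarith)) (by have := hφ _ hx₂; positivity),
    log_mul (by positivity) (hφ _ hx₂).ne', log_rpow two_pos]
  linarith

lemma eventually_log_le_of_antitoneOn_log_sub_mul_log
    (h : AntitoneOn (fun x => log (φ x) - c * log x) (Ici a)) :
    ∀ᶠ x in atTop, log (φ x) ≤ (c + 1) * log x := by
  filter_upwards [eventually_ge_atTop a,
    tendsto_log_atTop.eventually_ge_atTop (log (φ a) - c * log a)] with x hx hlog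
  have := h self_mem_Ici hx hx
  simp only at this
  linarith

end LogSandwich

section MeanValue

variable {f : ℝ → ℝ} {a x y : ℝ}

lemma mul_sub_le_sub_of_monotoneOn_deriv (hf : ∀ t ∈ Ici a, DifferentiableAt ℝ f t)
    (hf' : MonotoneOn (deriv f) (Ici a)) (hx : a ≤ x) (hxy : x ≤ y) :
    deriv f x * (y - x) ≤ f y - f x :=
  (convex_Icc x y).mul_sub_le_image_sub_of_le_deriv
    (fun t ht => (hf t (hx.trans ht.1)).continuousAt.continuousWithinAt)
    (fun t ht => (hf t (hx.trans (interior_subset ht).1)).differentiableWithinAt)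
    (fun _ ht => hf' hx (hx.trans (interior_subset ht).1) (interior_subset ht).1)
    x (left_mem_Icc.2 hxy) y (right_mem_Icc.2 hxy) hxy

lemma sub_le_mul_sub_of_monotoneOn_deriv (hf : ∀ t ∈ Ici a, DifferentiableAt ℝ f t)
    (hf' : MonotoneOn (deriv f) (Ici a)) (hx : a ≤ x) (hxy : x ≤ y) :
    f y - f x ≤ deriv f y * (y - x) :=
  (convex_Icc x y).image_sub_le_mul_sub_of_deriv_le
    (fun t ht => (hf t (hx.trans ht.1)).continuousAt.continuousWithinAt)
    (fun t ht => (hf t (hx.trans (interior_subset ht).1)).differentiableWithinAt)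
    (fun _ ht => hf' (hx.trans (interior_subset ht).1) (hx.trans hxy) (interior_subset ht).2)
    x (left_mem_Icc.2 hxy) y (right_mem_Icc.2 hxy) hxy

lemma eventually_le_mul_deriv_of_monotoneOn_deriv (ha : 0 < a)
    (hf : ∀ t ∈ Ici a, DifferentiableAt ℝ f t) (hf' : MonotoneOn (deriv f) (Ici a))
    (htop : Tendsto (deriv f) atTop atTop) : ∀ᶠ x in atTop, f x ≤ x * deriv f x := by
  filter_upwards [eventually_ge_atTop a, htop.eventually_ge_atTop (f a / a)] with x hx hfa
  have hmvt := sub_le_mul_sub_of_monotoneOn_deriv hf hf' le_rfl hx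
  rw [div_le_iff₀ ha] at hfa
  linarith

lemma eventually_mul_deriv_le_of_monotoneOn_deriv {c : ℝ} (ha : 0 < a)
    (hf : ∀ t ∈ Ici a, DifferentiableAt ℝ f t) (hf' : MonotoneOn (deriv f) (Ici a))
    (hdouble : ∀ x, 2 * a ≤ x → deriv f x ≤ 2 ^ c * deriv f (x / 2))
    (htop : Tendsto f atTop atTop) : ∀ᶠ x in atTop, x * deriv f x ≤ 2 ^ (c + 1) * f x := by
  filter_upwards [eventually_ge_atTop (2 * a),
    (htop.comp (tendsto_id.atTop_div_const two_pos)).eventually_ge_atTop 0]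
    with x hx (hfx₂ : 0 ≤ f (x / 2))
  have hmvt := mul_sub_le_sub_of_monotoneOn_deriv hf hf' (show a ≤ x / 2 by linarith)
    (show x / 2 ≤ x by linarith)
  calc x * deriv f x ≤ x * (2 ^ c * deriv f (x / 2)) := by
        gcongr
        exacts [by linarith, hdouble x hx]
    _ = 2 ^ c * 2 * (deriv f (x / 2) * (x - x / 2)) := by ring
    _ ≤ 2 ^ c * 2 * (f x - f (x / 2)) := by gcongr
    _ ≤ 2 ^ c * 2 * f x := by gcongr; linarith
    _ = 2 ^ (c + 1) * f x := by rw [rpow_add_one two_ne_zero]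

end MeanValue

lemma eventually_log_bounds_of_le_mul_of_mul_le {f φ : ℝ → ℝ} {C K : ℝ} (hK : 0 < K)
    (hφ : Tendsto φ atTop atTop) (hlogφ : ∀ᶠ x in atTop, log (φ x) ≤ C * log x)
    (hle : ∀ᶠ x in atTop, f x ≤ x * φ x) (hge : ∀ᶠ x in atTop, x * φ x ≤ K * f x) :
    ∀ᶠ x in atTop, log x ≤ log (f x) ∧ log (f x) ≤ (C + 1) * log x ∧
      log x ≤ 2 * log (f x / φ x) ∧ log (f x / φ x) ≤ log (f x) := by
  filter_upwards [eventually_gt_atTop 0, hφ.eventually_ge_atTop (max K 1),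
    tendsto_log_atTop.eventually_ge_atTop (2 * log K), hlogφ, hle, hge]
    with x hx hφx hlogx hlogφx hlex hgex
  have hφK : K ≤ φ x := le_of_max_le_left hφx
  have hφ1 : 1 ≤ φ x := le_of_max_le_right hφx
  have hφpos : 0 < φ x := by linarith
  have hfpos : 0 < f x := pos_of_mul_pos_right ((mul_pos hx hφpos).trans_le hgex) hK.le
  have hxf : x ≤ f x := le_of_mul_le_mul_left (by nlinarith) hK
  have hx_div : x / K ≤ f x / φ x := by rw [div_le_div_iff₀ hK hφpos]; linarith
  refine ⟨log_le_log hx hxf, ?_, ?_, log_le_log (div_pos hfpos hφpos) (div_le_self hfpos.le hφ1)⟩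
  · calc log (f x) ≤ log (x * φ x) := log_le_log hfpos hlex
      _ = log x + log (φ x) := log_mul hx.ne' hφpos.ne'
      _ ≤ (C + 1) * log x := by linarith
  · have := log_le_log (by positivity) hx_div
    rw [log_div hx.ne' hK.ne'] at this
    linarith

namespace GrowthCondition

variable {f : ℝ → ℝ} {x₀ : ℝ}

lemma exists_log_deriv_bounds (hf : GrowthCondition f 1 x₀) :
    ∃ a c₁ c₂, 0 < a ∧ x₀ ≤ a ∧ 0 < c₁ ∧ 0 ≤ c₂ ∧
      MonotoneOn (fun x => log (deriv f x) - c₁ * log x) (Ici a) ∧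
      AntitoneOn (fun x => log (deriv f x) - c₂ * log x) (Ici a) := by
  obtain ⟨-, hf', -, -, hpos, c₁, c₂, hc₁, hc₁₂, hbounds⟩ := hf
  obtain ⟨a, ha⟩ := eventually_atTop.1
    ((eventually_gt_atTop 0).and ((eventually_ge_atTop x₀).and hbounds))
  obtain ⟨ha₀, hx₀a, -⟩ := ha a le_rfl
  have hu : ∀ x ∈ Ici a, HasDerivAt (fun t => log (deriv f t))
      (deriv (deriv f) x / deriv f x) x := fun x hx =>
    (hf' x (hx₀a.trans hx)).hasDerivAt.log (hpos x (hx₀a.trans hx)).ne'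
  have hratio : ∀ x ∈ Ici a, c₁ * x⁻¹ ≤ deriv (deriv f) x / deriv f x ∧
      deriv (deriv f) x / deriv f x ≤ c₂ * x⁻¹ := fun x hx => by
    simpa only [rpow_neg_one] using (ha x hx).2.2
  exact ⟨a, c₁, c₂, ha₀, hx₀a, hc₁, hc₁.le.trans hc₁₂,
    monotoneOn_sub_mul_log ha₀ hu fun x hx => (hratio x hx).1,
    antitoneOn_sub_mul_log ha₀ hu fun x hx => (hratio x hx).2⟩

lemma exists_eventually_log_bounds (hf : GrowthCondition f 1 x₀) :
    ∃ C, 1 ≤ C ∧ ∀ᶠ x in atTop, log x ≤ log (f x) ∧ log (f x) ≤ C * log x ∧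
      log x ≤ 2 * log (f x / deriv f x) ∧ log (f x / deriv f x) ≤ log (f x) := by
  obtain ⟨a, c₁, c₂, ha, hx₀a, hc₁, hc₂, hmono, hanti⟩ := hf.exists_log_deriv_bounds
  obtain ⟨hdiff, -, -, htop, hpos, -⟩ := hf
  have hdiff : ∀ x ∈ Ici a, DifferentiableAt ℝ f x := fun x hx => hdiff x (hx₀a.trans hx)
  have hpos : ∀ x ∈ Ici a, 0 < deriv f x := fun x hx => hpos x (hx₀a.trans hx)
  have hf'mono := monotoneOn_of_monotoneOn_log_sub_mul_log ha hc₁.le hpos hmono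
  have hf'top := tendsto_atTop_of_monotoneOn_log_sub_mul_log hc₁ hpos hmono
  refine ⟨c₂ + 1 + 1, by linarith, eventually_log_bounds_of_le_mul_of_mul_le (by positivity) hf'top
    (eventually_log_le_of_antitoneOn_log_sub_mul_log hanti)
    (eventually_le_mul_deriv_of_monotoneOn_deriv ha hdiff hf'mono hf'top)
    (eventually_mul_deriv_le_of_monotoneOn_deriv ha hdiff hf'mono
      (fun x hx => le_two_rpow_mul_of_antitoneOn_log_sub_mul_log ha hpos hanti hx) htop)⟩

end GrowthCondition

namespace IsInverseOn

variable {f g : ℝ → ℝ} {x₀ : ℝ}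

lemma mapsTo (hg : IsInverseOn f g x₀) (hf : ContinuousOn f (Ici x₀))
    (htop : Tendsto f atTop atTop) : MapsTo g (Ici (f x₀)) (Ici x₀) := by
  intro y hy
  obtain ⟨b, hyb, hx₀b⟩ := ((htop.eventually_ge_atTop y).and (eventually_ge_atTop x₀)).exists
  obtain ⟨x, hx, rfl⟩ := intermediate_value_Icc hx₀b (hf.mono Icc_subset_Ici_self) ⟨hy, hyb⟩
  rw [mem_Ici, hg.1 x hx.1]
  exact hx.1

lemma monotoneOn (hg : IsInverseOn f g x₀) (hf : StrictMonoOn f (Ici x₀))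
    (hmaps : MapsTo g (Ici (f x₀)) (Ici x₀)) : MonotoneOn g (Ici (f x₀)) := by
  intro y hy z hz hyz
  rwa [← hf.le_iff_le (hmaps hy) (hmaps hz), hg.2 y hy, hg.2 z hz]

lemma tendsto_atTop (hg : IsInverseOn f g x₀) (hf : StrictMonoOn f (Ici x₀))
    (hg_mono : MonotoneOn g (Ici (f x₀))) : Tendsto g atTop atTop := by
  refine tendsto_atTop_atTop.2 fun b => ⟨f (max b x₀), fun y hy => ?_⟩
  have hb : f x₀ ≤ f (max b x₀) :=
    hf.monotoneOn self_mem_Ici (le_max_right b x₀) (le_max_right b x₀)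
  calc b ≤ max b x₀ := le_max_left b x₀
    _ = g (f (max b x₀)) := (hg.1 _ (le_max_right b x₀)).symm
    _ ≤ g y := hg_mono hb (hb.trans hy) hy

lemma continuousAt (hg : IsInverseOn f g x₀) (hf : StrictMonoOn f (Ici x₀))
    (hg_mono : MonotoneOn g (Ici (f x₀))) {y : ℝ} (hy : f x₀ < y) : ContinuousAt g y := by
  have hgy : x₀ < g y := by
    have hle := hg_mono self_mem_Ici hy.le hy.le
    rw [hg.1 x₀ self_mem_Ici] at hle
    refine hle.lt_of_ne fun h => hy.ne ?_
    rw [← hg.2 y hy.le, ← h]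
  refine continuousAt_of_monotoneOn_of_image_mem_nhds hg_mono (Ici_mem_nhds hy)
    (mem_of_superset (Ioi_mem_nhds hgy) fun x (hx : x₀ < x) => ?_)
  exact ⟨f x, (hf self_mem_Ici hx.le hx).le, hg.1 x hx.le⟩

end IsInverseOn

/-- If `f` satisfies the growth condition with exponent `lam = 1`, then
`ln f⁻¹(x) ≍ ln x` as `x → ∞` and `ln((f⁻¹)'(1/ε)/ε) ≍ ln(1/ε)` as `ε → 0⁺`. -/
theorem log_inv_asymp_lambda_one (f g : ℝ → ℝ) (x₀ : ℝ)
    (hf : GrowthCondition f 1 x₀)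
    (hg : IsInverseOn f g x₀) :
    (∃ C₁ C₂ : ℝ, 0 < C₁ ∧ C₁ ≤ C₂ ∧
      ∀ᶠ x in atTop,
        C₁ * Real.log x ≤ Real.log (g x) ∧ Real.log (g x) ≤ C₂ * Real.log x) ∧
    (∃ C₁ C₂ : ℝ, 0 < C₁ ∧ C₁ ≤ C₂ ∧
      ∀ᶠ ε in 𝓝[>] (0 : ℝ),
        C₁ * Real.log (1 / ε) ≤ Real.log (deriv g (1 / ε) / ε) ∧
        Real.log (deriv g (1 / ε) / ε) ≤ C₂ * Real.log (1 / ε)) := by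
  obtain ⟨C, hC, hlog⟩ := hf.exists_eventually_log_bounds
  obtain ⟨hdiff, -, hmono, htop, hpos, -⟩ := hf
  have hmaps := hg.mapsTo (fun x hx => (hdiff x hx).continuousAt.continuousWithinAt) htop
  have hg_mono := hg.monotoneOn hmono hmaps
  have hderiv : ∀ y, f x₀ < y → deriv g y = (deriv f (g y))⁻¹ := fun y hy =>
    (HasDerivAt.of_local_left_inverse (hg.continuousAt hmono hg_mono hy)
      (hdiff _ (hmaps hy.le)).hasDerivAt (hpos _ (hmaps hy.le)).ne'
      ((eventually_gt_nhds hy).mono fun z hz => hg.2 z hz.le)).deriv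
  have key : ∀ᶠ y in atTop, log y ≤ C * log (g y) ∧ log (g y) ≤ log y ∧
      log y ≤ 2 * C * log (deriv g y * y) ∧ log (deriv g y * y) ≤ log y := by
    filter_upwards [(hg.tendsto_atTop hmono hg_mono).eventually hlog, eventually_gt_atTop (f x₀)]
      with y hy hfy
    rw [hg.2 y hfy.le] at hy
    obtain ⟨hgy_le, hy_le, hgy_le_quot, hquot_le⟩ := hy
    have hC_quot := mul_le_mul_of_nonneg_left hgy_le_quot (show 0 ≤ C by linarith)
    rw [hderiv y hfy, inv_mul_eq_div]
    exact ⟨hy_le, hgy_le, by linarith, hquot_le⟩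
  refine ⟨⟨C⁻¹, 1, by positivity, inv_le_one_of_one_le₀ hC, key.mono fun y h => ?_⟩,
    ⟨(2 * C)⁻¹, 1, by positivity, inv_le_one_of_one_le₀ (by linarith),
      (tendsto_inv_nhdsGT_zero.eventually key).mono fun ε h => ?_⟩⟩
  · rw [inv_mul_le_iff₀ (by positivity), one_mul]
    exact ⟨h.1, h.2.1⟩
  · rw [one_div, div_eq_mul_inv, inv_mul_le_iff₀ (by positivity), one_mul]
    exact h.2.2
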